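/- Let G be a connected graph on vertex set {1,...,n} with n ≥ 2 and Φ = (F_1,...,F_n) with |V(F_i)| ≥ 2 for all i, and suppose γ(F_1) = ... = γ(F_n) and Γ(F_1) = ... = Γ(F_n). Then G[Φ] is well γ-dominated if and only if either (i) G is well γ-dominated and every F_i is complete, or (ii) G is complete and every F_i is well γ-dominated with γ(F_i) = 2. -/

import Mathlib

open scoped Classical

/-- A dominating set: every vertex is in `D` or adjacent to a vertex of `D`. -/
def isDominatingSet {V : Type*} (H : SimpleGraph V) (D : Finset V) : Prop :=
  ∀ v : V, v ∈ D ∨ ∃ u ∈ D, H.Adj u v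

/-- A total dominating set: every vertex has a neighbor in `D`. -/
def isTotalDominatingSet {V : Type*} (H : SimpleGraph V) (D : Finset V) : Prop :=
  ∀ v : V, ∃ u ∈ D, H.Adj u v

def isMinimalDominatingSet {V : Type*} (H : SimpleGraph V) (D : Finset V) : Prop :=
  isDominatingSet H D ∧ ∀ D' : Finset V, D' ⊂ D → ¬ isDominatingSet H D'

def isMinimalTotalDominatingSet {V : Type*} (H : SimpleGraph V) (D : Finset V) : Prop :=
  isTotalDominatingSet H D ∧ ∀ D' : Finset V, D' ⊂ D → ¬ isTotalDominatingSet H D'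

noncomputable def domNum {V : Type*} (H : SimpleGraph V) : ℕ :=
  sInf {k | ∃ D : Finset V, isDominatingSet H D ∧ D.card = k}

noncomputable def totalDomNum {V : Type*} (H : SimpleGraph V) : ℕ :=
  sInf {k | ∃ D : Finset V, isTotalDominatingSet H D ∧ D.card = k}

noncomputable def upperDomNum {V : Type*} (H : SimpleGraph V) : ℕ :=
  sSup {k | ∃ D : Finset V, isMinimalDominatingSet H D ∧ D.card = k}

noncomputable def upperTotalDomNum {V : Type*} (H : SimpleGraph V) : ℕ :=
  sSup {k | ∃ D : Finset V, isMinimalTotalDominatingSet H D ∧ D.card = k}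

/-- Well (γ-)dominated: all minimal dominating sets have the same size. -/
def WellDominated {V : Type*} (H : SimpleGraph V) : Prop :=
  ∀ D₁ D₂ : Finset V, isMinimalDominatingSet H D₁ → isMinimalDominatingSet H D₂ →
    D₁.card = D₂.card

/-- Well γ_t-dominated: all minimal total dominating sets have the same size. -/
def WellTotalDominated {V : Type*} (H : SimpleGraph V) : Prop :=
  ∀ D₁ D₂ : Finset V, isMinimalTotalDominatingSet H D₁ → isMinimalTotalDominatingSet H D₂ →
    D₁.card = D₂.card

/-- Restrained dominating set: dominating and every vertex outside `D` has a
neighbor outside `D`. -/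
def isRestrainedDominatingSet {V : Type*} (H : SimpleGraph V) (D : Finset V) : Prop :=
  isDominatingSet H D ∧ ∀ v ∉ D, ∃ u ∉ D, H.Adj u v

/-- Outer-connected dominating set: dominating and the subgraph induced by the
complement of `D` is connected. -/
def isOuterConnectedDominatingSet {V : Type*} (H : SimpleGraph V) (D : Finset V) : Prop :=
  isDominatingSet H D ∧ (H.induce ((↑D : Set V)ᶜ)).Connected

def isTotalRestrainedDominatingSet {V : Type*} (H : SimpleGraph V) (D : Finset V) : Prop :=
  isTotalDominatingSet H D ∧ ∀ v ∉ D, ∃ u ∉ D, H.Adj u v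

def isTotalOuterConnectedDominatingSet {V : Type*} (H : SimpleGraph V) (D : Finset V) : Prop :=
  isTotalDominatingSet H D ∧ (H.induce ((↑D : Set V)ᶜ)).Connected

noncomputable def restrainedDomNum {V : Type*} (H : SimpleGraph V) : ℕ :=
  sInf {k | ∃ D : Finset V, isRestrainedDominatingSet H D ∧ D.card = k}

noncomputable def ocDomNum {V : Type*} (H : SimpleGraph V) : ℕ :=
  sInf {k | ∃ D : Finset V, isOuterConnectedDominatingSet H D ∧ D.card = k}

noncomputable def totalRestrainedDomNum {V : Type*} (H : SimpleGraph V) : ℕ :=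
  sInf {k | ∃ D : Finset V, isTotalRestrainedDominatingSet H D ∧ D.card = k}

noncomputable def totalOcDomNum {V : Type*} (H : SimpleGraph V) : ℕ :=
  sInf {k | ∃ D : Finset V, isTotalOuterConnectedDominatingSet H D ∧ D.card = k}

/-- Paired dominating set: dominating and the induced subgraph on `D` has a
perfect matching. -/
def isPairedDominatingSet {V : Type*} (H : SimpleGraph V) (D : Finset V) : Prop :=
  isDominatingSet H D ∧
    ∃ M : SimpleGraph.Subgraph (H.induce (↑D : Set V)), M.IsPerfectMatching

noncomputable def pairedDomNum {V : Type*} (H : SimpleGraph V) : ℕ :=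
  sInf {k | ∃ D : Finset V, isPairedDominatingSet H D ∧ D.card = k}

def isIndependentSet {V : Type*} (H : SimpleGraph V) (D : Finset V) : Prop :=
  ∀ u ∈ D, ∀ v ∈ D, ¬ H.Adj u v

def isMaximalIndependentSet {V : Type*} (H : SimpleGraph V) (D : Finset V) : Prop :=
  isIndependentSet H D ∧ ∀ D' : Finset V, D ⊂ D' → ¬ isIndependentSet H D'

/-- The independent domination number `i(H)`. -/
noncomputable def indepDomNum {V : Type*} (H : SimpleGraph V) : ℕ :=
  sInf {k | ∃ D : Finset V, isMaximalIndependentSet H D ∧ D.card = k}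

/-- The independence number `β₀(H)`. -/
noncomputable def indepNum {V : Type*} (H : SimpleGraph V) : ℕ :=
  sSup {k | ∃ D : Finset V, isIndependentSet H D ∧ D.card = k}

/-- An efficient dominating set: every vertex is dominated by exactly one
member of `D`. -/
def isEfficientDominatingSet {V : Type*} (H : SimpleGraph V) (D : Finset V) : Prop :=
  ∀ v : V, ∃! u : V, u ∈ D ∧ (u = v ∨ H.Adj u v)

/-- The generalized lexicographic product `G[Φ]` of a graph `G` on `Fin n` and a
family `Φ = (F 0, …, F (n-1))` of pairwise disjoint graphs: the `F i` are induced
subgraphs, and vertices in distinct `F i`, `F j` are adjacent iff `i j ∈ E(G)`. -/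
def GLP {n : ℕ} (G : SimpleGraph (Fin n)) {V : Fin n → Type*}
    (F : ∀ i, SimpleGraph (V i)) : SimpleGraph (Σ i, V i) where
  Adj x y := (x.1 ≠ y.1 ∧ G.Adj x.1 y.1) ∨ ∃ h : x.1 = y.1, (F y.1).Adj (h ▸ x.2) y.2
  symm := by
    constructor
    rintro ⟨i, a⟩ ⟨j, b⟩ (⟨hne, hadj⟩ | ⟨h, hadj⟩)
    · exact Or.inl ⟨fun hh => hne hh.symm, hadj.symm⟩
    · dsimp only at h
      subst h
      exact Or.inr ⟨rfl, hadj.symm⟩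
  loopless := by
    constructor
    rintro ⟨i, a⟩ (⟨hne, _⟩ | ⟨h, hadj⟩)
    · exact hne rfl
    · exact (F i).irrefl hadj

/-- The number of vertices of `D ∩ V(F i)`. -/
noncomputable def layerCount {n : ℕ} {V : Fin n → Type*} [∀ i, Fintype (V i)]
    (D : Finset (Σ i, V i)) (i : Fin n) : ℕ :=
  (D.filter (fun x => x.1 = i)).card

/-!
Let `c` be the common size of the minimal dominating sets of `G[Φ]`. For a maximal independent
set `S` of `G`, a minimal dominating set of `F i` for each `i ∈ S` gives a minimal dominating set
of `G[Φ]`; varying a single layer shows that every `F i` is well dominated, and counting gives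
`c = γ |S|`. If `γ = 1` every layer is complete, and then minimal dominating sets of `G[Φ]`
correspond, size for size, to their projections to `G`. If `γ ≥ 2` no layer has a dominating
vertex, so one vertex above each vertex of a minimal total dominating set `T` of `G` is a minimal
dominating set of `G[Φ]`, and `|T| = c ≥ 2 |S|`. A connected non-complete `G` has an induced path
`x - z - y`; for a maximal independent `J ∋ x, y`, the set `J ∪ {z}` together with a neighbour
of every other vertex of `J` is a total dominating set of size `< 2 |J|`. So `G` is complete, and
`S = {i}`, `T = {i, j}` give `γ = 2`. Conversely, under (ii) a minimal dominating set of `G[Φ]`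
meeting two layers is a pair, and one inside a single layer contains a minimal dominating set of
that layer, which has size 2.
-/

open Finset

section Domination

variable {W : Type*} {H : SimpleGraph W}

theorem isDominatingSet.mono {D D' : Finset W} (hD : isDominatingSet H D) (h : D ⊆ D') :
    isDominatingSet H D' := fun v =>
  (hD v).imp (fun hv => h hv) fun ⟨u, hu, huv⟩ => ⟨u, h hu, huv⟩

theorem isDominatingSet.nonempty [Nonempty W] {D : Finset W} (hD : isDominatingSet H D) :
    D.Nonempty := by
  obtain ⟨v⟩ := ‹Nonempty W›
  rcases hD v with hv | ⟨u, hu, -⟩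
  exacts [⟨v, hv⟩, ⟨u, hu⟩]

theorem isMinimalDominatingSet_of_erase [DecidableEq W] {D : Finset W} (hD : isDominatingSet H D)
    (h : ∀ x ∈ D, ¬ isDominatingSet H (D.erase x)) : isMinimalDominatingSet H D := by
  refine ⟨hD, fun D' hD'D hD' => ?_⟩
  obtain ⟨x, hxD, hxD'⟩ := exists_of_ssubset hD'D
  exact h x hxD <| hD'.mono fun y hy =>
    mem_erase.2 ⟨fun hyx => hxD' (hyx ▸ hy), hD'D.subset hy⟩

theorem isMinimalDominatingSet.eq_of_subset {D S : Finset W} (hD : isMinimalDominatingSet H D)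
    (hS : isDominatingSet H S) (hSD : S ⊆ D) : S = D :=
  by_contra fun hne => hD.2 S (hSD.ssubset_of_ne hne) hS

theorem isMinimalDominatingSet_of_minimal {D : Finset W} (h : Minimal (isDominatingSet H) D) :
    isMinimalDominatingSet H D :=
  ⟨h.prop, fun _ hlt => h.not_prop_of_lt hlt⟩

theorem isMinimalTotalDominatingSet_of_minimal {D : Finset W}
    (h : Minimal (isTotalDominatingSet H) D) : isMinimalTotalDominatingSet H D :=
  ⟨h.prop, fun _ hlt => h.not_prop_of_lt hlt⟩

theorem isMaximalIndependentSet_of_maximal {S : Finset W} (h : Maximal (isIndependentSet H) S) :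
    isMaximalIndependentSet H S :=
  ⟨h.prop, fun _ hlt => h.not_prop_of_gt hlt⟩

theorem isIndependentSet_singleton (x : W) : isIndependentSet H {x} := by
  intro a ha b hb hab
  rw [mem_singleton] at ha hb
  subst ha hb
  exact H.irrefl hab

theorem isIndependentSet.insert [DecidableEq W] {S : Finset W} {v : W} (hS : isIndependentSet H S)
    (hv : ∀ u ∈ S, ¬ H.Adj u v) : isIndependentSet H (insert v S) := by
  intro a ha b hb hab
  rcases mem_insert.1 ha with rfl | haS <;> rcases mem_insert.1 hb with rfl | hbS
  · exact H.irrefl hab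
  · exact hv b hbS hab.symm
  · exact hv a haS hab
  · exact hS a haS b hbS hab

theorem isIndependentSet_pair [DecidableEq W] {x y : W} (hxy : ¬ H.Adj x y) :
    isIndependentSet H {x, y} :=
  (isIndependentSet_singleton y).insert fun u hu => by
    rw [mem_singleton.1 hu, H.adj_comm]
    exact hxy

theorem isMaximalIndependentSet.isMinimalDominatingSet {S : Finset W}
    (hS : isMaximalIndependentSet H S) : isMinimalDominatingSet H S := by
  have hdom : isDominatingSet H S := fun v => by
    by_contra! hv
    exact hS.2 _ (ssubset_insert hv.1) (hS.1.insert hv.2)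
  refine isMinimalDominatingSet_of_erase hdom fun x hx hdom' => ?_
  rcases hdom' x with hx' | ⟨u, hu, hux⟩
  · exact notMem_erase x S hx'
  · exact hS.1 u (mem_of_mem_erase hu) x hx hux

theorem domNum_le_card {D : Finset W} (hD : isDominatingSet H D) : domNum H ≤ D.card :=
  Nat.sInf_le ⟨D, hD, rfl⟩

theorem exists_isMinimalDominatingSet_card_eq_domNum [Fintype W] (H : SimpleGraph W) :
    ∃ D, isMinimalDominatingSet H D ∧ D.card = domNum H := by
  obtain ⟨D, hD, hcard⟩ :=
    Nat.sInf_mem (s := {k | ∃ D : Finset W, isDominatingSet H D ∧ D.card = k})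
    ⟨_, univ, fun v => Or.inl (mem_univ v), rfl⟩
  replace hcard : D.card = domNum H := hcard
  refine ⟨D, ⟨hD, fun D' hD'D hD' => ?_⟩, hcard⟩
  exact (domNum_le_card hD').not_gt (hcard ▸ card_lt_card hD'D)

theorem WellDominated.card_eq_domNum [Fintype W] (h : WellDominated H) {D : Finset W}
    (hD : isMinimalDominatingSet H D) : D.card = domNum H := by
  obtain ⟨M, hM, hMcard⟩ := exists_isMinimalDominatingSet_card_eq_domNum H
  exact (h D M hD hM).trans hMcard

theorem domNum_pos [Fintype W] [Nonempty W] (H : SimpleGraph W) : 0 < domNum H := by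
  obtain ⟨D, hD, hcard⟩ := exists_isMinimalDominatingSet_card_eq_domNum H
  exact hcard ▸ hD.1.nonempty.card_pos

theorem not_isDominatingSet_singleton (h : 2 ≤ domNum H) (a : W) : ¬ isDominatingSet H {a} :=
  fun ha => by simpa using h.trans (domNum_le_card ha)

theorem WellDominated.eq_top_of_domNum_eq_one [Fintype W] (hH : WellDominated H)
    (h1 : domNum H = 1) : H = ⊤ := by
  ext a b
  refine ⟨H.ne_of_adj, fun hab => by_contra fun hnadj => ?_⟩
  obtain ⟨J, habJ, hJ⟩ := exists_maximal_ge_of_wellFoundedGT _ _ (isIndependentSet_pair hnadj)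
  have hJcard := hH.card_eq_domNum (isMaximalIndependentSet_of_maximal hJ).isMinimalDominatingSet
  have := card_le_card habJ
  rw [card_pair hab] at this
  omega

theorem isMaximalIndependentSet_top_singleton (x : W) :
    isMaximalIndependentSet (⊤ : SimpleGraph W) {x} := by
  refine ⟨isIndependentSet_singleton x, fun S hxS hS => ?_⟩
  obtain ⟨w, hwS, hwx⟩ := exists_of_ssubset hxS
  exact hS w hwS x (hxS.subset (mem_singleton_self x)) (by simpa using hwx)

theorem isMinimalTotalDominatingSet_top_pair [DecidableEq W] {x y : W} (hxy : x ≠ y) :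
    isMinimalTotalDominatingSet (⊤ : SimpleGraph W) {x, y} := by
  refine ⟨fun v => ?_, fun D hD hDtot => ?_⟩
  · by_cases hvx : v = x
    · exact ⟨y, by simp, by simpa [hvx] using hxy.symm⟩
    · exact ⟨x, by simp, by simpa using Ne.symm hvx⟩
  · obtain ⟨u, hu, -⟩ := hDtot x
    obtain ⟨w, hw, hwu⟩ := hDtot u
    have h2 : 1 < D.card := one_lt_card.2 ⟨w, hw, u, hu, hwu.ne⟩
    have := card_lt_card hD
    rw [card_pair hxy] at this
    omega

theorem SimpleGraph.Connected.exists_adj_adj_not_adj_ne_of_ne_top (hH : H.Connected)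
    (hHtop : H ≠ ⊤) : ∃ x z y, H.Adj x z ∧ H.Adj z y ∧ ¬ H.Adj x y ∧ x ≠ y := by
  obtain ⟨x, y, hxy, hnadj⟩ : ∃ x y, x ≠ y ∧ ¬ H.Adj x y := by
    by_contra! h
    exact hHtop (by ext x y; exact ⟨H.ne_of_adj, h x y⟩)
  obtain ⟨p, -, hp⟩ := (hH.preconnected x y).exists_path_of_dist
  exact p.exists_adj_adj_not_adj_ne hp
    ((hH.preconnected x y).one_lt_dist_of_ne_of_not_adj hxy hnadj)

theorem exists_isTotalDominatingSet_card_lt (hadj : ∀ v, ∃ u, H.Adj v u) {J : Finset W}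
    (hJ : isDominatingSet H J) {x y z : W} (hx : x ∈ J) (hy : y ∈ J) (hxy : x ≠ y)
    (hxz : H.Adj x z) (hzy : H.Adj z y) :
    ∃ T, isTotalDominatingSet H T ∧ T.card < 2 * J.card := by
  choose f hf using hadj
  refine ⟨insert z (J ∪ ((J.erase x).erase y).image f), fun v => ?_, ?_⟩
  · by_cases hvJ : v ∈ J
    · by_cases hvx : v = x
      · exact ⟨z, mem_insert_self _ _, hvx ▸ hxz.symm⟩
      by_cases hvy : v = y
      · exact ⟨z, mem_insert_self _ _, hvy ▸ hzy⟩
      · have hv : v ∈ (J.erase x).erase y := by simp [hvJ, hvx, hvy]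
        exact ⟨f v, mem_insert_of_mem (mem_union_right _ (mem_image_of_mem f hv)), (hf v).symm⟩
    · obtain ⟨u, hu, huv⟩ := (hJ v).resolve_left hvJ
      exact ⟨u, mem_insert_of_mem (mem_union_left _ hu), huv⟩
  · have h1 := card_insert_le z (J ∪ ((J.erase x).erase y).image f)
    have h2 := card_union_le J (((J.erase x).erase y).image f)
    have h3 := card_image_le (s := (J.erase x).erase y) (f := f)
    have h4 := card_erase_of_mem (mem_erase.2 ⟨hxy.symm, hy⟩)
    have h5 := card_erase_of_mem hx
    have h6 : 1 < J.card := one_lt_card.2 ⟨x, hx, y, hy, hxy⟩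
    omega

theorem SimpleGraph.Connected.eq_top_of_two_mul_card_le [Finite W] [Nontrivial W]
    (hH : H.Connected)
    (h : ∀ S T, isMaximalIndependentSet H S → isMinimalTotalDominatingSet H T →
      2 * S.card ≤ T.card) : H = ⊤ := by
  by_contra hHtop
  obtain ⟨x, z, y, hxz, hzy, hxy, hne⟩ := hH.exists_adj_adj_not_adj_ne_of_ne_top hHtop
  obtain ⟨J, hxyJ, hJ⟩ := exists_maximal_ge_of_wellFoundedGT _ _ (isIndependentSet_pair hxy)
  replace hJ := isMaximalIndependentSet_of_maximal hJ
  obtain ⟨T, hT, hTcard⟩ := exists_isTotalDominatingSet_card_lt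
    hH.preconnected.exists_adj_of_nontrivial hJ.isMinimalDominatingSet.1
    (hxyJ (by simp)) (hxyJ (by simp)) hne hxz hzy
  obtain ⟨T', hT'T, hT'⟩ := exists_minimal_le_of_wellFoundedLT _ _ hT
  have := h J T' hJ (isMinimalTotalDominatingSet_of_minimal hT')
  have := card_le_card hT'T
  omega

end Domination

theorem card_sigma_singleton {ι : Type*} {α : ι → Type*} (S : Finset ι) (v : ∀ i, α i) :
    (S.sigma fun i => ({v i} : Finset (α i))).card = S.card := by
  simp [card_sigma]

section LexProduct

variable {n : ℕ} {G : SimpleGraph (Fin n)} {V : Fin n → Type*} {F : ∀ i, SimpleGraph (V i)}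

theorem glp_adj_same {i : Fin n} {a b : V i} :
    (GLP G F).Adj ⟨i, a⟩ ⟨i, b⟩ ↔ (F i).Adj a b := by
  simp [GLP]

theorem glp_adj_of_ne {i j : Fin n} (hij : i ≠ j) {a : V i} {b : V j} :
    (GLP G F).Adj ⟨i, a⟩ ⟨j, b⟩ ↔ G.Adj i j := by
  simp [GLP, hij]

theorem isMinimalDominatingSet_sigma [∀ i, Nonempty (V i)] {S : Finset (Fin n)}
    (hS : isMaximalIndependentSet G S) {A : ∀ i, Finset (V i)}
    (hA : ∀ i ∈ S, isMinimalDominatingSet (F i) (A i)) :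
    isMinimalDominatingSet (GLP G F) (S.sigma A) := by
  refine isMinimalDominatingSet_of_erase (fun ⟨k, c⟩ => ?_) ?_
  · by_cases hk : k ∈ S
    · rcases (hA k hk).1 c with hc | ⟨u, hu, huc⟩
      · exact Or.inl (mem_sigma.2 ⟨hk, hc⟩)
      · exact Or.inr ⟨⟨k, u⟩, mem_sigma.2 ⟨hk, hu⟩, glp_adj_same.2 huc⟩
    · obtain ⟨j, hj, hjk⟩ := (hS.isMinimalDominatingSet.1 k).resolve_left hk
      obtain ⟨u, hu⟩ := (hA j hj).1.nonempty
      exact Or.inr ⟨⟨j, u⟩, mem_sigma.2 ⟨hj, hu⟩, (glp_adj_of_ne hjk.ne).2 hjk⟩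
  · rintro ⟨j, x⟩ hx hdom
    obtain ⟨hj, hxA⟩ := mem_sigma.1 hx
    -- a private neighbour `v` of `x` in `F j` is left undominated
    obtain ⟨v, hv⟩ :
        ∃ v, ¬ (v ∈ (A j).erase x ∨ ∃ u ∈ (A j).erase x, (F j).Adj u v) := by
      simpa [isDominatingSet] using (hA j hj).2 _ (erase_ssubset hxA)
    apply hv
    rcases hdom ⟨j, v⟩ with hv' | ⟨⟨l, u⟩, hu, hlu⟩
    · left
      simpa [hj] using hv'
    · obtain ⟨hne, hl, huA⟩ : (l = j → ¬ u ≍ x) ∧ l ∈ S ∧ u ∈ A l := by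
        simpa using hu
      rcases eq_or_ne l j with rfl | hlj
      · exact Or.inr ⟨u, mem_erase.2 ⟨fun h => hne rfl (heq_of_eq h), huA⟩,
          glp_adj_same.1 hlu⟩
      · exact absurd ((glp_adj_of_ne hlj).1 hlu) (hS.1 l hl j hj)

theorem isMinimalDominatingSet_sigma_singleton_of_total
    (hF : ∀ i (a : V i), ¬ isDominatingSet (F i) {a})
    {T : Finset (Fin n)} (hT : isMinimalTotalDominatingSet G T) (v : ∀ i, V i) :
    isMinimalDominatingSet (GLP G F) (T.sigma fun i => {v i}) := by
  refine isMinimalDominatingSet_of_erase (fun ⟨k, c⟩ => ?_) ?_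
  · obtain ⟨j, hj, hjk⟩ := hT.1 k
    exact Or.inr ⟨⟨j, v j⟩, by simp [hj], (glp_adj_of_ne hjk.ne).2 hjk⟩
  · rintro ⟨i, x⟩ hx hdom
    obtain ⟨hi, rfl⟩ : i ∈ T ∧ x = v i := by simpa using hx
    -- `k` is dominated in `G` by `i` alone, and `v k` misses some `c` of its own layer
    obtain ⟨k, hk⟩ : ∃ k, ∀ j ∈ T.erase i, ¬ G.Adj j k := by
      simpa [isTotalDominatingSet] using hT.2 _ (erase_ssubset hi)
    obtain ⟨c, hc⟩ :
        ∃ c, c ≠ v k ∧ ∀ u ∈ ({v k} : Finset (V k)), ¬ (F k).Adj u c := by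
      simpa [isDominatingSet] using hF k (v k)
    rcases hdom ⟨k, c⟩ with hc' | ⟨⟨l, u⟩, hu, hlk⟩
    · exact hc.1 (mem_singleton.1 (mem_sigma.1 (mem_of_mem_erase hc')).2)
    · obtain ⟨hne, hl, rfl⟩ : (l = i → ¬ u ≍ v i) ∧ l ∈ T ∧ u = v l := by
        simpa using hu
      have hli : l ≠ i := by
        rintro rfl
        exact hne rfl HEq.rfl
      rcases eq_or_ne l k with rfl | hlk'
      · exact hc.2 _ (mem_singleton_self _) (glp_adj_same.1 hlk)
      · exact hk l (mem_erase.2 ⟨hli, hl⟩) ((glp_adj_of_ne hlk').1 hlk)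

theorem isDominatingSet_glp_iff_of_forall_eq_top [∀ i, Nonempty (V i)] (hF : ∀ i, F i = ⊤)
    {D : Finset (Σ i, V i)} :
    isDominatingSet (GLP G F) D ↔ isDominatingSet G (D.image Sigma.fst) := by
  constructor
  · intro hD k
    obtain ⟨c⟩ : Nonempty (V k) := inferInstance
    rcases hD ⟨k, c⟩ with h | ⟨⟨l, u⟩, hu, hlk⟩
    · exact Or.inl (mem_image_of_mem Sigma.fst h)
    · rcases eq_or_ne l k with rfl | hl
      · exact Or.inl (mem_image_of_mem Sigma.fst hu)
      · exact Or.inr ⟨l, mem_image_of_mem Sigma.fst hu, (glp_adj_of_ne hl).1 hlk⟩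
  · rintro hD ⟨k, c⟩
    rcases hD k with hk | ⟨l, hl, hlk⟩
    · obtain ⟨⟨k, b⟩, hb, rfl⟩ := mem_image.1 hk
      by_cases hbc : b = c
      · exact Or.inl (hbc ▸ hb)
      · exact Or.inr ⟨_, hb, glp_adj_same.2 (by simpa [hF] using hbc)⟩
    · obtain ⟨⟨l, b⟩, hb, rfl⟩ := mem_image.1 hl
      exact Or.inr ⟨_, hb, (glp_adj_of_ne hlk.ne).2 hlk⟩

theorem isMinimalDominatingSet.injOn_fst_of_forall_eq_top [∀ i, Nonempty (V i)]
    (hF : ∀ i, F i = ⊤) {D : Finset (Σ i, V i)} (hD : isMinimalDominatingSet (GLP G F) D) :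
    Set.InjOn Sigma.fst (D : Set (Σ i, V i)) := by
  rintro ⟨i, b⟩ hb ⟨j, b'⟩ hb' (rfl : i = j)
  by_contra hne
  refine hD.2 _ (erase_ssubset hb') ((isDominatingSet_glp_iff_of_forall_eq_top hF).2 ?_)
  have himage : (D.erase ⟨i, b'⟩).image Sigma.fst = D.image Sigma.fst := by
    refine (image_subset_image (erase_subset _ _)).antisymm fun k hk => ?_
    obtain ⟨x, hx, rfl⟩ := mem_image.1 hk
    by_cases hxb' : x = ⟨i, b'⟩
    · exact mem_image.2 ⟨⟨i, b⟩, mem_erase.2 ⟨hne, hb⟩, by simp [hxb']⟩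
    · exact mem_image_of_mem _ (mem_erase.2 ⟨hxb', hx⟩)
  exact himage ▸ (isDominatingSet_glp_iff_of_forall_eq_top hF).1 hD.1

theorem isMinimalDominatingSet.image_fst_of_forall_eq_top [∀ i, Nonempty (V i)]
    (hF : ∀ i, F i = ⊤) {D : Finset (Σ i, V i)} (hD : isMinimalDominatingSet (GLP G F) D) :
    isMinimalDominatingSet G (D.image Sigma.fst) := by
  refine ⟨(isDominatingSet_glp_iff_of_forall_eq_top hF).1 hD.1, fun S hS hSdom => ?_⟩
  refine hD.2 (D.filter (·.1 ∈ S)) ?_ ((isDominatingSet_glp_iff_of_forall_eq_top hF).2 ?_)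
  · obtain ⟨k, hk, hkS⟩ := exists_of_ssubset hS
    obtain ⟨x, hx, rfl⟩ := mem_image.1 hk
    exact filter_ssubset.2 ⟨x, hx, hkS⟩
  · refine hSdom.mono fun k hk => ?_
    obtain ⟨x, hx, rfl⟩ := mem_image.1 (hS.subset hk)
    exact mem_image_of_mem _ (mem_filter.2 ⟨hx, hk⟩)

theorem isMinimalDominatingSet.sigma_singleton_of_forall_eq_top [∀ i, Nonempty (V i)]
    (hF : ∀ i, F i = ⊤) {S : Finset (Fin n)} (hS : isMinimalDominatingSet G S)
    (v : ∀ i, V i) :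
    isMinimalDominatingSet (GLP G F) (S.sigma fun i => {v i}) := by
  have himage : (S.sigma fun i => {v i}).image Sigma.fst = S := by
    ext
    simp
  refine ⟨(isDominatingSet_glp_iff_of_forall_eq_top hF).2 (by rw [himage]; exact hS.1),
    fun D hD hDdom => ?_⟩
  have hsub : D.image Sigma.fst ⊆ S := himage ▸ image_subset_image hD.subset
  refine hS.2 _ (hsub.ssubset_of_ne fun h => ?_)
    ((isDominatingSet_glp_iff_of_forall_eq_top hF).1 hDdom)
  have h₁ := card_image_le (s := D) (f := Sigma.fst)
  have h₂ := card_lt_card hD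
  rw [h] at h₁
  rw [card_sigma_singleton] at h₂
  omega

theorem wellDominated_glp_iff_of_forall_eq_top [∀ i, Nonempty (V i)] (hF : ∀ i, F i = ⊤) :
    WellDominated (GLP G F) ↔ WellDominated G := by
  constructor
  · intro h S₁ S₂ h₁ h₂
    have v : ∀ i, V i := fun i => Classical.arbitrary (V i)
    simpa only [card_sigma_singleton] using h _ _ (h₁.sigma_singleton_of_forall_eq_top hF v)
      (h₂.sigma_singleton_of_forall_eq_top hF v)
  · intro h D₁ D₂ h₁ h₂
    rw [← card_image_of_injOn (h₁.injOn_fst_of_forall_eq_top hF),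
      ← card_image_of_injOn (h₂.injOn_fst_of_forall_eq_top hF)]
    exact h _ _ (h₁.image_fst_of_forall_eq_top hF) (h₂.image_fst_of_forall_eq_top hF)

theorem card_eq_card_of_isMinimalTotalDominatingSet [∀ i, Nonempty (V i)]
    (hwd : WellDominated (GLP G F))
    (hF : ∀ i (a : V i), ¬ isDominatingSet (F i) {a}) {D : Finset (Σ i, V i)}
    (hD : isMinimalDominatingSet (GLP G F) D) {T : Finset (Fin n)}
    (hT : isMinimalTotalDominatingSet G T) : D.card = T.card := by
  rw [hwd _ _ hD (isMinimalDominatingSet_sigma_singleton_of_total hF hT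
    fun i => Classical.arbitrary _), card_sigma_singleton]

theorem isMinimalDominatingSet.eq_pair_of_fst_ne {D : Finset (Σ i, V i)}
    (hD : isMinimalDominatingSet (GLP ⊤ F) D) {p q : Σ i, V i} (hp : p ∈ D) (hq : q ∈ D)
    (hpq : p.1 ≠ q.1) : D = {p, q} := by
  obtain ⟨i, a⟩ := p
  obtain ⟨j, b⟩ := q
  have hji : j ≠ i := fun h => hpq h.symm
  refine (hD.eq_of_subset (fun ⟨k, c⟩ => ?_)
    (insert_subset hp (singleton_subset_iff.2 hq))).symm
  rcases eq_or_ne k i with rfl | hki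
  · exact Or.inr ⟨⟨j, b⟩, by simp, (glp_adj_of_ne hji).2 hji⟩
  · exact Or.inr ⟨⟨i, a⟩, by simp, (glp_adj_of_ne hki.symm).2 hki.symm⟩

variable [∀ i, Nonempty (V i)] [∀ i, Fintype (V i)]

theorem WellDominated.of_glp (hwd : WellDominated (GLP G F)) (i : Fin n) :
    WellDominated (F i) := by
  obtain ⟨S, hiS, hS⟩ :=
    exists_maximal_ge_of_wellFoundedGT _ _ (isIndependentSet_singleton (H := G) i)
  replace hS := isMaximalIndependentSet_of_maximal hS
  have hi : i ∈ S := hiS (mem_singleton_self i)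
  choose A hA using fun j => exists_isMinimalDominatingSet_card_eq_domNum (F j)
  have hmin (D : Finset (V i)) (hD : isMinimalDominatingSet (F i) D) :
      isMinimalDominatingSet (GLP G F) (S.sigma (Function.update A i D)) :=
    isMinimalDominatingSet_sigma hS fun j _ => by
      rcases eq_or_ne j i with rfl | hji
      · simpa using hD
      · simpa [hji] using (hA j).1
  have hcard (D : Finset (V i)) :
      (S.sigma (Function.update A i D)).card = D.card + ∑ j ∈ S.erase i, (A j).card := by
    rw [card_sigma, ← add_sum_erase S _ hi, Function.update_self]
    exact congrArg _ <| sum_congr rfl fun j hj => by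
      rw [Function.update_of_ne (ne_of_mem_erase hj)]
  intro D₁ D₂ h₁ h₂
  have := hwd _ _ (hmin D₁ h₁) (hmin D₂ h₂)
  rw [hcard, hcard] at this
  omega

theorem card_eq_mul_card_of_isMaximalIndependentSet (hwd : WellDominated (GLP G F)) {γ : ℕ}
    (hγ : ∀ i, domNum (F i) = γ) {D : Finset (Σ i, V i)}
    (hD : isMinimalDominatingSet (GLP G F) D)
    {S : Finset (Fin n)} (hS : isMaximalIndependentSet G S) : D.card = γ * S.card := by
  choose A hA using fun j => exists_isMinimalDominatingSet_card_eq_domNum (F j)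
  rw [hwd _ _ hD (isMinimalDominatingSet_sigma hS fun j _ => (hA j).1), card_sigma,
    sum_congr rfl fun j _ => (hA j).2.trans (hγ j), sum_const, smul_eq_mul, mul_comm]

theorem eq_top_and_eq_two_of_wellDominated_glp [Nontrivial (Fin n)] (hG : G.Connected)
    (hwd : WellDominated (GLP G F)) {γ : ℕ} (hγ : ∀ i, domNum (F i) = γ) (hγ2 : 2 ≤ γ) :
    G = ⊤ ∧ γ = 2 := by
  obtain ⟨D, hD, -⟩ := exists_isMinimalDominatingSet_card_eq_domNum (GLP G F)
  have hS (S) (hS : isMaximalIndependentSet G S) : D.card = γ * S.card :=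
    card_eq_mul_card_of_isMaximalIndependentSet hwd hγ hD hS
  have hT (T) (hT : isMinimalTotalDominatingSet G T) : D.card = T.card :=
    card_eq_card_of_isMinimalTotalDominatingSet hwd
      (fun i => not_isDominatingSet_singleton ((hγ i).symm ▸ hγ2)) hD hT
  have hGtop : G = ⊤ := hG.eq_top_of_two_mul_card_le fun S T hS' hT' => by
    rw [← hT T hT', hS S hS']
    exact Nat.mul_le_mul_right _ hγ2
  subst hGtop
  obtain ⟨i, j, hij⟩ := exists_pair_ne (Fin n)
  have h1 := hS {i} (isMaximalIndependentSet_top_singleton i)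
  have h2 := hT {i, j} (isMinimalTotalDominatingSet_top_pair hij)
  rw [card_singleton, mul_one] at h1
  rw [card_pair hij] at h2
  exact ⟨rfl, by omega⟩

theorem isMinimalDominatingSet.card_eq_domNum_of_forall_fst_eq
    {D : Finset (Σ i, V i)} (hD : isMinimalDominatingSet (GLP ⊤ F) D) {i : Fin n}
    (hDi : ∀ q ∈ D, q.1 = i) (hFi : WellDominated (F i)) : D.card = domNum (F i) := by
  set A := D.preimage (Sigma.mk i) sigma_mk_injective.injOn
  have hA : isDominatingSet (F i) A := fun c => by
    rcases hD.1 ⟨i, c⟩ with h | ⟨⟨l, u⟩, hu, hlu⟩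
    · exact Or.inl (mem_preimage.2 h)
    · obtain rfl : l = i := hDi _ hu
      exact Or.inr ⟨u, mem_preimage.2 hu, glp_adj_same.1 hlu⟩
  obtain ⟨A', hA'A, hA'⟩ := exists_minimal_le_of_wellFoundedLT _ _ hA
  obtain ⟨u, hu⟩ := hA'.prop.nonempty
  have hdom : isDominatingSet (GLP ⊤ F) (A'.image (Sigma.mk i)) := by
    rintro ⟨k, c⟩
    rcases eq_or_ne k i with rfl | hki
    · rcases hA'.prop c with hc | ⟨w, hw, hwc⟩
      · exact Or.inl (mem_image_of_mem _ hc)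
      · exact Or.inr ⟨⟨k, w⟩, mem_image_of_mem _ hw, glp_adj_same.2 hwc⟩
    · exact Or.inr ⟨⟨i, u⟩, mem_image_of_mem _ hu, (glp_adj_of_ne hki.symm).2 hki.symm⟩
  have hsub : A'.image (Sigma.mk i) ⊆ D :=
    image_subset_iff.2 fun x hx => mem_preimage.1 (hA'A hx)
  rw [← hD.eq_of_subset hdom hsub, card_image_of_injective _ sigma_mk_injective,
    hFi.card_eq_domNum (isMinimalDominatingSet_of_minimal hA')]

theorem wellDominated_glp_of_eq_top [Nonempty (Fin n)] (hG : G = ⊤)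
    (hF : ∀ i, WellDominated (F i) ∧ domNum (F i) = 2) : WellDominated (GLP G F) := by
  subst hG
  have : Nonempty (Σ i, V i) := ⟨⟨Classical.arbitrary _, Classical.arbitrary _⟩⟩
  suffices h : ∀ D, isMinimalDominatingSet (GLP ⊤ F) D → D.card = 2 from
    fun D₁ D₂ h₁ h₂ => (h D₁ h₁).trans (h D₂ h₂).symm
  intro D hD
  obtain ⟨p, hp⟩ := hD.1.nonempty
  by_cases hsplit : ∃ q ∈ D, p.1 ≠ q.1
  · obtain ⟨q, hq, hpq⟩ := hsplit
    rw [hD.eq_pair_of_fst_ne hp hq hpq, card_pair (ne_of_apply_ne Sigma.fst hpq)]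
  · push Not at hsplit
    rw [hD.card_eq_domNum_of_forall_fst_eq (fun q hq => (hsplit q hq).symm) (hF p.1).1,
      (hF p.1).2]

end LexProduct

theorem stmt_19_general {n : ℕ} (hn : 2 ≤ n) (G : SimpleGraph (Fin n)) (hG : G.Connected)
    (V : Fin n → Type) [∀ i, Fintype (V i)] (F : ∀ i, SimpleGraph (V i))
    (hV : ∀ i, 2 ≤ Fintype.card (V i))
    (hγ : ∀ i j, domNum (F i) = domNum (F j)) :
    WellDominated (GLP G F) ↔
      ((WellDominated G ∧ ∀ i, F i = ⊤) ∨
       (G = ⊤ ∧ ∀ i, WellDominated (F i) ∧ domNum (F i) = 2)) := by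
  have : Nontrivial (Fin n) := Fin.nontrivial_iff_two_le.2 hn
  have (i : Fin n) : Nonempty (V i) := Fintype.card_pos_iff.1 (by linarith [hV i])
  obtain ⟨i₀⟩ : Nonempty (Fin n) := inferInstance
  have hγi (i : Fin n) : domNum (F i) = domNum (F i₀) := hγ i i₀
  constructor
  · intro hwd
    have hFwd (i : Fin n) : WellDominated (F i) := hwd.of_glp i
    obtain hγ1 | hγ2 : domNum (F i₀) = 1 ∨ 2 ≤ domNum (F i₀) := by
      have := domNum_pos (F i₀)
      omega
    · have hFtop (i : Fin n) : F i = ⊤ := (hFwd i).eq_top_of_domNum_eq_one ((hγi i).trans hγ1)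
      exact Or.inl ⟨(wellDominated_glp_iff_of_forall_eq_top hFtop).1 hwd, hFtop⟩
    · obtain ⟨hGtop, hγ2⟩ := eq_top_and_eq_two_of_wellDominated_glp hG hwd hγi hγ2
      exact Or.inr ⟨hGtop, fun i => ⟨hFwd i, (hγi i).trans hγ2⟩⟩
  · rintro (⟨hGwd, hFtop⟩ | ⟨hGtop, hF⟩)
    · exact (wellDominated_glp_iff_of_forall_eq_top hFtop).2 hGwd
    · exact wellDominated_glp_of_eq_top hGtop hF

/-- With `|V(F i)| ≥ 2` and all `F i` sharing the same `γ` and the same `Γ`: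
`G[Φ]` is well `γ`-dominated iff either `G` is well `γ`-dominated and every
`F i` is complete, or `G` is complete and every `F i` is well `γ`-dominated
with `γ(F i) = 2`. -/
theorem stmt_19 {n : ℕ} (hn : 2 ≤ n) (G : SimpleGraph (Fin n)) (hG : G.Connected)
    (V : Fin n → Type) [∀ i, Fintype (V i)] (F : ∀ i, SimpleGraph (V i))
    (hV : ∀ i, 2 ≤ Fintype.card (V i))
    (hγ : ∀ i j, domNum (F i) = domNum (F j))
    (hΓ : ∀ i j, upperDomNum (F i) = upperDomNum (F j)) :
    WellDominated (GLP G F) ↔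
      ((WellDominated G ∧ ∀ i, F i = ⊤) ∨
       (G = ⊤ ∧ ∀ i, WellDominated (F i) ∧ domNum (F i) = 2)) :=
  stmt_19_general hn G hG V F hV hγ
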